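/- Let B be a Bernoulli random variable with P(B=1) = q, and let Z ∈ [0,1] be a random variable with E[Z] = r ∈ (0,1) and E[Z | B = 1] = s. Let Z̃ be a Bernoulli variable with P(Z̃ = 1 | Z) = Z (drawn independently given Z). Then q^2 · KL(s, r) ≤ q · I(B; Z̃) ≤ q · I(B; Z), where KL is Bernoulli KL divergence and I is mutual information. -/

import Mathlib

attribute [local instance] Classical.propDecidable

/-- Probability of an event on a finite sample space with weight function `μ`. -/
noncomputable def pr {Ω : Type*} [Fintype Ω] (μ : Ω → ℝ) (E : Ω → Prop) : ℝ :=
  ∑ ω, if E ω then μ ω else 0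

/-- Shannon mutual information (natural logarithm) between the discrete random
variables `X` and `Y` on a finite sample space, with the convention `0 · log 0 = 0`. -/
noncomputable def mutInfo {Ω S T : Type*} [Fintype Ω]
    (μ : Ω → ℝ) (X : Ω → S) (Y : Ω → T) : ℝ :=
  ∑ x ∈ Finset.univ.image X, ∑ y ∈ Finset.univ.image Y,
    pr μ (fun ω => X ω = x ∧ Y ω = y) *
      Real.log (pr μ (fun ω => X ω = x ∧ Y ω = y) /
        (pr μ (fun ω => X ω = x) * pr μ (fun ω => Y ω = y)))


/-- Bernoulli Kullback–Leibler divergence. -/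
noncomputable def klBer (p q : ℝ) : ℝ :=
  p * Real.log (p / q) + (1 - p) * Real.log ((1 - p) / (1 - q))

/-!
Mutual information splits into the slices
`∑ y, P(X = x, Y = y) log (P(X = x, Y = y) / (P(X = x) P(Y = y)))`,
each nonnegative by the log-sum inequality, and the slice `B = 1` of `I(B; Z̃)` is exactly
`q · KL(s, r)` because `P(Z̃ = 1 | B = 1) = s` and `P(Z̃ = 1) = r`.
Conditional independence says that the joint law of `(B, Z̃)` is the image of that of `(B, Z)`
under the kernel `z ↦ Bernoulli(z)`; the log-sum inequality applied to each output value of the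
kernel, summed using that the kernel is stochastic, is the data-processing inequality
`I(B; Z̃) ≤ I(B; Z)`.
-/

open Finset Real

theorem sum_mul_log_div_le {ι : Type*} (s : Finset ι) (a c : ι → ℝ)
    (ha : ∀ i ∈ s, 0 ≤ a i) (hc : ∀ i ∈ s, 0 ≤ c i) (hac : ∀ i ∈ s, c i = 0 → a i = 0) :
    (∑ i ∈ s, a i) * log ((∑ i ∈ s, a i) / ∑ i ∈ s, c i) ≤
      ∑ i ∈ s, a i * log (a i / c i) := by
  set C := ∑ i ∈ s, c i
  rcases (sum_nonneg hc).eq_or_lt with hC | hC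
  · have ha0 : ∀ i ∈ s, a i = 0 := fun i hi =>
      hac i hi ((sum_eq_zero_iff_of_nonneg hc).1 hC.symm i hi)
    rw [sum_eq_zero ha0, zero_mul, sum_eq_zero fun i hi => by rw [ha0 i hi, zero_mul]]
  -- Jensen for `x ↦ x log x` at the points `a i / c i` with weights `c i / C`
  have hterm : ∀ i ∈ s, c i / C * (a i / c i) = a i / C := fun i hi => by
    rcases (hc i hi).eq_or_lt with h | h
    · simp [← h, hac i hi h.symm]
    · field_simp
  have hjensen := convexOn_mul_log.map_sum_le (t := s) (w := fun i => c i / C)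
    (p := fun i => a i / c i) (fun i hi => div_nonneg (hc i hi) hC.le)
    (by rw [← sum_div, div_self hC.ne']) (fun i hi => div_nonneg (ha i hi) (hc i hi))
  simp only [smul_eq_mul, ← mul_assoc] at hjensen
  have hrhs : ∑ i ∈ s, c i / C * (a i / c i) * log (a i / c i) =
      (∑ i ∈ s, a i * log (a i / c i)) / C := by
    rw [sum_div]
    exact sum_congr rfl fun i hi => by rw [hterm i hi, div_mul_eq_mul_div]
  rwa [hrhs, sum_congr rfl hterm, ← sum_div, div_mul_eq_mul_div,
    div_le_div_iff_of_pos_right hC] at hjensen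

theorem sum_kernel_mul_log_div_le {ι τ : Type*} [Fintype τ] (s : Finset ι) (K : τ → ι → ℝ)
    (hK0 : ∀ t, ∀ i ∈ s, 0 ≤ K t i) (hK1 : ∀ i ∈ s, ∑ t, K t i = 1) (a c : ι → ℝ)
    (ha : ∀ i ∈ s, 0 ≤ a i) (hc : ∀ i ∈ s, 0 ≤ c i) (hac : ∀ i ∈ s, c i = 0 → a i = 0) :
    ∑ t, (∑ i ∈ s, K t i * a i) * log ((∑ i ∈ s, K t i * a i) / ∑ i ∈ s, K t i * c i) ≤
      ∑ i ∈ s, a i * log (a i / c i) :=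
  calc _ ≤ ∑ t, ∑ i ∈ s, K t i * a i * log (K t i * a i / (K t i * c i)) :=
        sum_le_sum fun t _ => sum_mul_log_div_le s _ _
          (fun i hi => mul_nonneg (hK0 t i hi) (ha i hi))
          (fun i hi => mul_nonneg (hK0 t i hi) (hc i hi))
          (fun i hi h => by
            rcases mul_eq_zero.1 h with h | h <;> simp [h, hac i hi])
    _ = ∑ i ∈ s, (∑ t, K t i) * (a i * log (a i / c i)) := by
        rw [sum_comm]
        refine sum_congr rfl fun i _ => ?_
        rw [sum_mul]
        refine sum_congr rfl fun t _ => ?_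
        rcases eq_or_ne (K t i) 0 with h | h
        · simp [h]
        · rw [mul_div_mul_left _ _ h, mul_assoc]
    _ = _ := sum_congr rfl fun i hi => by rw [hK1 i hi, one_mul]

section Probability

variable {Ω S T : Type*} [Fintype Ω] (μ : Ω → ℝ)

lemma pr_nonneg (hμ : ∀ ω, 0 ≤ μ ω) (E : Ω → Prop) : 0 ≤ pr μ E :=
  sum_nonneg fun ω _ => by split_ifs <;> simp [hμ ω]

lemma pr_mono (hμ : ∀ ω, 0 ≤ μ ω) {E F : Ω → Prop} (h : ∀ ω, E ω → F ω) :
    pr μ E ≤ pr μ F :=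
  sum_le_sum fun ω _ => by
    by_cases hE : E ω
    · simp [hE, h ω hE]
    · by_cases hF : F ω <;> simp [hE, hF, hμ ω]

lemma pr_eq_zero_of_imp (hμ : ∀ ω, 0 ≤ μ ω) {E F : Ω → Prop} (h : ∀ ω, E ω → F ω)
    (hF : pr μ F = 0) : pr μ E = 0 :=
  le_antisymm (hF ▸ pr_mono μ hμ h) (pr_nonneg μ hμ E)

lemma pr_and_eq_zero_of_mul_eq_zero (hμ : ∀ ω, 0 ≤ μ ω) {E F : Ω → Prop}
    (h : pr μ E * pr μ F = 0) : pr μ (fun ω => E ω ∧ F ω) = 0 := by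
  rcases mul_eq_zero.1 h with h | h
  · exact pr_eq_zero_of_imp μ hμ (fun ω => And.left) h
  · exact pr_eq_zero_of_imp μ hμ (fun ω => And.right) h

lemma pr_eq_zero_of_forall_not {E : Ω → Prop} (h : ∀ ω, ¬ E ω) : pr μ E = 0 :=
  sum_eq_zero fun ω _ => if_neg (h ω)

lemma pr_true (hsum : ∑ ω, μ ω = 1) : pr μ (fun _ => True) = 1 := by
  simpa [pr] using hsum

lemma pr_and_comm (E F : Ω → Prop) : pr μ (fun ω => E ω ∧ F ω) = pr μ (fun ω => F ω ∧ E ω) :=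
  congrArg (pr μ) (funext fun _ => propext and_comm)

lemma sum_image_mul_pr_and_eq (Z : Ω → T) (E : Ω → Prop) (g : T → ℝ) :
    ∑ z ∈ univ.image Z, g z * pr μ (fun ω => E ω ∧ Z ω = z) =
      ∑ ω, if E ω then μ ω * g (Z ω) else 0 := by
  simp only [pr, mul_sum]
  rw [sum_comm]
  refine sum_congr rfl fun ω _ => ?_
  by_cases hE : E ω <;> simp [hE, mul_comm]

lemma sum_image_pr_and_eq (Z : Ω → T) (E : Ω → Prop) :
    ∑ z ∈ univ.image Z, pr μ (fun ω => E ω ∧ Z ω = z) = pr μ E := by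
  simpa [pr] using sum_image_mul_pr_and_eq μ Z E 1

lemma sum_pr_and_eq [Fintype T] (Z : Ω → T) (E : Ω → Prop) :
    ∑ z, pr μ (fun ω => E ω ∧ Z ω = z) = pr μ E := by
  rw [← sum_image_pr_and_eq μ Z E]
  refine (sum_subset (subset_univ _) fun z _ hz => pr_eq_zero_of_forall_not μ ?_).symm
  simp_all

lemma pr_and_eq_sum_mul_pr_of_condIndep (hμ : ∀ ω, 0 ≤ μ ω) {τ : Type*} (X : Ω → S)
    (Y : Ω → τ) (Z : Ω → T) (K : τ → T → ℝ)
    (hYZ : ∀ y z, pr μ (fun ω => Y ω = y ∧ Z ω = z) = K y z * pr μ (fun ω => Z ω = z))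
    (hind : ∀ z y x,
      pr μ (fun ω => Y ω = y ∧ X ω = x ∧ Z ω = z) * pr μ (fun ω => Z ω = z)
        = pr μ (fun ω => Y ω = y ∧ Z ω = z) * pr μ (fun ω => X ω = x ∧ Z ω = z))
    (x : S) (y : τ) :
    pr μ (fun ω => X ω = x ∧ Y ω = y) =
      ∑ z ∈ univ.image Z, K y z * pr μ (fun ω => X ω = x ∧ Z ω = z) := by
  rw [← sum_image_pr_and_eq μ Z]
  refine sum_congr rfl fun z _ => ?_
  have hassoc : pr μ (fun ω => (X ω = x ∧ Y ω = y) ∧ Z ω = z) =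
      pr μ (fun ω => Y ω = y ∧ X ω = x ∧ Z ω = z) :=
    congrArg (pr μ) (funext fun _ => propext (by tauto))
  rw [hassoc]
  rcases eq_or_ne (pr μ (fun ω => Z ω = z)) 0 with hz | hz
  · rw [pr_eq_zero_of_imp μ hμ (fun ω h => h.2.2) hz,
      pr_eq_zero_of_imp μ hμ (fun ω h => h.2) hz, mul_zero]
  · refine mul_right_cancel₀ hz ((hind z y x).trans ?_)
    rw [hYZ]
    ring

noncomputable def mutInfoTerm (X : Ω → S) (Y : Ω → T) (x : S) (y : T) : ℝ :=
  pr μ (fun ω => X ω = x ∧ Y ω = y) *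
    log (pr μ (fun ω => X ω = x ∧ Y ω = y) /
      (pr μ (fun ω => X ω = x) * pr μ (fun ω => Y ω = y)))

lemma mutInfo_eq_sum_mutInfoTerm (X : Ω → S) (Y : Ω → T) :
    mutInfo μ X Y = ∑ x ∈ univ.image X, ∑ y ∈ univ.image Y, mutInfoTerm μ X Y x y :=
  rfl

lemma mutInfoTerm_eq_zero {X : Ω → S} {Y : Ω → T} {x : S} {y : T}
    (h : pr μ (fun ω => X ω = x ∧ Y ω = y) = 0) : mutInfoTerm μ X Y x y = 0 := by
  rw [mutInfoTerm, h, zero_mul]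

lemma sum_image_mutInfoTerm_eq_sum [Fintype T] (X : Ω → S) (Y : Ω → T) (x : S) :
    ∑ y ∈ univ.image Y, mutInfoTerm μ X Y x y = ∑ y, mutInfoTerm μ X Y x y :=
  sum_subset (subset_univ _) fun y _ hy =>
    mutInfoTerm_eq_zero μ (pr_eq_zero_of_forall_not μ fun ω h => hy (by simp [← h.2]))

lemma sum_mutInfoTerm_nonneg (hμ : ∀ ω, 0 ≤ μ ω) (hsum : ∑ ω, μ ω = 1)
    (X : Ω → S) (Y : Ω → T) (x : S) : 0 ≤ ∑ y ∈ univ.image Y, mutInfoTerm μ X Y x y := by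
  have hlogsum := sum_mul_log_div_le (univ.image Y)
    (fun y => pr μ (fun ω => X ω = x ∧ Y ω = y))
    (fun y => pr μ (fun ω => X ω = x) * pr μ (fun ω => Y ω = y))
    (fun y _ => pr_nonneg μ hμ _) (fun y _ => mul_nonneg (pr_nonneg μ hμ _) (pr_nonneg μ hμ _))
    (fun y _ => pr_and_eq_zero_of_mul_eq_zero μ hμ)
  have hY := sum_image_pr_and_eq μ Y (fun _ => True)
  simp only [true_and] at hY
  rwa [sum_image_pr_and_eq, ← mul_sum, hY, pr_true μ hsum, mul_one, log_div_self,
    mul_zero] at hlogsum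

lemma mutInfo_nonneg (hμ : ∀ ω, 0 ≤ μ ω) (hsum : ∑ ω, μ ω = 1) (X : Ω → S) (Y : Ω → T) :
    0 ≤ mutInfo μ X Y :=
  sum_nonneg fun x _ => sum_mutInfoTerm_nonneg μ hμ hsum X Y x

lemma sum_mutInfoTerm_le_mutInfo (hμ : ∀ ω, 0 ≤ μ ω) (hsum : ∑ ω, μ ω = 1)
    (X : Ω → S) (Y : Ω → T) (x : S) :
    ∑ y ∈ univ.image Y, mutInfoTerm μ X Y x y ≤ mutInfo μ X Y := by
  by_cases hx : x ∈ univ.image X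
  · exact single_le_sum (f := fun x => ∑ y ∈ univ.image Y, mutInfoTerm μ X Y x y)
      (fun x _ => sum_mutInfoTerm_nonneg μ hμ hsum X Y x) hx
  · rw [sum_eq_zero fun y _ => mutInfoTerm_eq_zero μ
      (pr_eq_zero_of_forall_not μ fun ω h => hx (by simp [← h.1]))]
    exact mutInfo_nonneg μ hμ hsum X Y

theorem mutInfo_le_mutInfo_of_kernel (hμ : ∀ ω, 0 ≤ μ ω) {τ : Type*} [Fintype τ]
    (X : Ω → S) (Y : Ω → τ) (Z : Ω → T) (K : τ → T → ℝ)
    (hK0 : ∀ y ω, 0 ≤ K y (Z ω)) (hK1 : ∀ ω, ∑ y, K y (Z ω) = 1)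
    (hXY : ∀ x y, pr μ (fun ω => X ω = x ∧ Y ω = y) =
      ∑ z ∈ univ.image Z, K y z * pr μ (fun ω => X ω = x ∧ Z ω = z))
    (hY : ∀ y, pr μ (fun ω => Y ω = y) = ∑ z ∈ univ.image Z, K y z * pr μ (fun ω => Z ω = z)) :
    mutInfo μ X Y ≤ mutInfo μ X Z := by
  rw [mutInfo_eq_sum_mutInfoTerm, mutInfo_eq_sum_mutInfoTerm]
  refine sum_le_sum fun x _ => ?_
  have hdpi := sum_kernel_mul_log_div_le (univ.image Z) K
    (fun y => forall_mem_image.2 fun ω _ => hK0 y ω) (forall_mem_image.2 fun ω _ => hK1 ω)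
    (fun z => pr μ (fun ω => X ω = x ∧ Z ω = z))
    (fun z => pr μ (fun ω => X ω = x) * pr μ (fun ω => Z ω = z))
    (fun z _ => pr_nonneg μ hμ _) (fun z _ => mul_nonneg (pr_nonneg μ hμ _) (pr_nonneg μ hμ _))
    (fun z _ => pr_and_eq_zero_of_mul_eq_zero μ hμ)
  simp only [mul_left_comm _ (pr μ (fun ω => X ω = x)), ← mul_sum, ← hXY, ← hY] at hdpi
  rwa [sum_image_mutInfoTerm_eq_sum]

theorem mul_klBer_le_mutInfo (hμ : ∀ ω, 0 ≤ μ ω) (hsum : ∑ ω, μ ω = 1)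
    (X : Ω → S) (Y : Ω → Bool) (x : S) {q r s : ℝ} (hq : pr μ (fun ω => X ω = x) = q)
    (hr : pr μ (fun ω => Y ω = true) = r) (hs : pr μ (fun ω => X ω = x ∧ Y ω = true) = s * q) :
    q * klBer s r ≤ mutInfo μ X Y := by
  rcases eq_or_ne q 0 with rfl | hq0
  · simpa using mutInfo_nonneg μ hμ hsum X Y
  have hs' : pr μ (fun ω => X ω = x ∧ Y ω = false) = (1 - s) * q := by
    have hsplit := sum_pr_and_eq μ Y (fun ω => X ω = x)
    rw [Fintype.sum_bool, hs, hq] at hsplit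
    linarith
  have hr' : pr μ (fun ω => Y ω = false) = 1 - r := by
    have hsplit := sum_pr_and_eq μ Y (fun _ => True)
    simp only [true_and, Fintype.sum_bool, hr, pr_true μ hsum] at hsplit
    linarith
  calc q * klBer s r = ∑ y, mutInfoTerm μ X Y x y := by
        rw [Fintype.sum_bool]
        simp only [mutInfoTerm, hq, hr, hs, hs', hr']
        rw [mul_comm q r, mul_comm q (1 - r), mul_div_mul_right _ _ hq0,
          mul_div_mul_right _ _ hq0, klBer]
        ring
    _ ≤ mutInfo μ X Y := by
        rw [← sum_image_mutInfoTerm_eq_sum]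
        exact sum_mutInfoTerm_le_mutInfo μ hμ hsum X Y x

end Probability

theorem kl_le_mutInfo_general {Ω : Type*} [Fintype Ω]
    (μ : Ω → ℝ) (hμ : ∀ ω, 0 ≤ μ ω) (hsum : ∑ ω, μ ω = 1)
    (B Zt : Ω → Bool) (Z : Ω → ℝ) (hZ : ∀ ω, Z ω ∈ Set.Icc (0:ℝ) 1)
    (q r s : ℝ)
    (hq : pr μ (fun ω => B ω = true) = q)
    (hr : ∑ ω, μ ω * Z ω = r)
    (hs : ∑ ω, (if B ω = true then μ ω * Z ω else 0) = s * q)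
    -- `Z̃` is Bernoulli with conditional success probability `Z`:
    (hZt : ∀ z : ℝ, pr μ (fun ω => Zt ω = true ∧ Z ω = z) = z * pr μ (fun ω => Z ω = z))
    -- `Z̃` is conditionally independent of `B` given `Z`:
    (hind : ∀ (z : ℝ) (bt bv : Bool),
      pr μ (fun ω => Zt ω = bt ∧ B ω = bv ∧ Z ω = z) * pr μ (fun ω => Z ω = z)
        = pr μ (fun ω => Zt ω = bt ∧ Z ω = z) * pr μ (fun ω => B ω = bv ∧ Z ω = z)) :
    q ^ 2 * klBer s r ≤ q * mutInfo μ B Zt ∧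
      q * mutInfo μ B Zt ≤ q * mutInfo μ B Z := by
  have hq0 : 0 ≤ q := hq ▸ pr_nonneg μ hμ _
  set K : Bool → ℝ → ℝ := fun t z => if t then z else 1 - z
  have hZtZ : ∀ t z, pr μ (fun ω => Zt ω = t ∧ Z ω = z) = K t z * pr μ (fun ω => Z ω = z) := by
    rintro (_ | _) z
    · have hsplit := sum_pr_and_eq μ Zt (fun ω => Z ω = z)
      rw [Fintype.sum_bool, pr_and_comm, pr_and_comm μ (fun ω => Z ω = z), hZt] at hsplit
      show _ = (1 - z) * _
      linarith
    · exact hZt z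
  have hBZt := pr_and_eq_sum_mul_pr_of_condIndep μ hμ B Zt Z K hZtZ hind
  have hZt_eq := fun t => (sum_image_pr_and_eq μ Z (fun ω => Zt ω = t)).symm.trans
    (sum_congr rfl fun z _ => hZtZ t z)
  have hdpi := mutInfo_le_mutInfo_of_kernel μ hμ B Zt Z K
    (fun t ω => by cases t <;> simp [K, (hZ ω).1, (hZ ω).2])
    (fun ω => by simp [K]) hBZt hZt_eq
  have hlow := mul_klBer_le_mutInfo μ hμ hsum B Zt true hq
    (by simpa [K, hZt_eq, hr] using sum_image_mul_pr_and_eq μ Z (fun _ => True) id)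
    (by simpa [K, hBZt, hs] using sum_image_mul_pr_and_eq μ Z (fun ω => B ω = true) id)
  refine ⟨?_, mul_le_mul_of_nonneg_left hdpi hq0⟩
  calc q ^ 2 * klBer s r = q * (q * klBer s r) := by ring
    _ ≤ q * mutInfo μ B Zt := mul_le_mul_of_nonneg_left hlow hq0

/-- Core of Lemma 2: `q² KL(s,r) ≤ q I(B; Z̃) ≤ q I(B; Z)`, where `Z̃` is a
Bernoulli randomization of `Z` drawn independently of `B` given `Z`. -/
theorem kl_le_mutInfo {Ω : Type*} [Fintype Ω]
    (μ : Ω → ℝ) (hμ : ∀ ω, 0 ≤ μ ω) (hsum : ∑ ω, μ ω = 1)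
    (B Zt : Ω → Bool) (Z : Ω → ℝ) (hZ : ∀ ω, Z ω ∈ Set.Icc (0:ℝ) 1)
    (q r s : ℝ)
    (hq : pr μ (fun ω => B ω = true) = q)
    (hr : ∑ ω, μ ω * Z ω = r) (hr' : r ∈ Set.Ioo (0:ℝ) 1)
    (hs : ∑ ω, (if B ω = true then μ ω * Z ω else 0) = s * q)
    -- `Z̃` is Bernoulli with conditional success probability `Z`:
    (hZt : ∀ z : ℝ, pr μ (fun ω => Zt ω = true ∧ Z ω = z) = z * pr μ (fun ω => Z ω = z))
    -- `Z̃` is conditionally independent of `B` given `Z`: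
    (hind : ∀ (z : ℝ) (bt bv : Bool),
      pr μ (fun ω => Zt ω = bt ∧ B ω = bv ∧ Z ω = z) * pr μ (fun ω => Z ω = z)
        = pr μ (fun ω => Zt ω = bt ∧ Z ω = z) * pr μ (fun ω => B ω = bv ∧ Z ω = z)) :
    q ^ 2 * klBer s r ≤ q * mutInfo μ B Zt ∧
      q * mutInfo μ B Zt ≤ q * mutInfo μ B Z :=
  kl_le_mutInfo_general μ hμ hsum B Zt Z hZ q r s hq hr hs hZt hind
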